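/- The expected number of induced rooted forests on k vertices in the binomial random graph G(n,p) equals C(n,k) * q^(-C(k,2)) * (k*p*q + 1)^(k-1), where q = 1/(1-p). -/

import Mathlib

open MeasureTheory

/-- Bernoulli measure on `Bool` with success probability `p`. -/
noncomputable def bernoulliMeasure (p : ℝ) : Measure Bool :=
  (ENNReal.ofReal p) • Measure.dirac true + (ENNReal.ofReal (1 - p)) • Measure.dirac false

/-- The Erdős–Rényi measure `G(n,p)`: each potential edge (element of `Sym2 (Fin n)`)
is present independently with probability `p`. -/
noncomputable def erMeasure (n : ℕ) (p : ℝ) : Measure (Sym2 (Fin n) → Bool) :=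
  Measure.pi fun _ => bernoulliMeasure p

/-- The graph determined by the edge indicators `ω`. -/
def erGraph (n : ℕ) (ω : Sym2 (Fin n) → Bool) : SimpleGraph (Fin n) where
  Adj u v := u ≠ v ∧ ω s(u, v)
  symm := by
    constructor
    intro u v h
    exact ⟨h.1.symm, by rw [Sym2.eq_swap]; exact h.2⟩
  loopless := by
    constructor
    intro v h
    exact h.1 rfl

/-- The number of induced rooted forests on `k` vertices in `G`: pairs consisting of a
`k`-element vertex set `S` whose induced subgraph is acyclic, together with a set of
roots `R ⊆ S`, exactly one in each connected component of the induced subgraph. -/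
noncomputable def countIndRootedForests (n k : ℕ) (G : SimpleGraph (Fin n)) : ℕ :=
  Nat.card {SR : Finset (Fin n) × Finset (Fin n) //
    SR.1.card = k ∧ SR.2 ⊆ SR.1 ∧
    (G.induce (SR.1 : Set (Fin n))).IsAcyclic ∧
    ∀ v : (SR.1 : Set (Fin n)), ∃! r : (SR.1 : Set (Fin n)),
      (r : Fin n) ∈ SR.2 ∧ (G.induce (SR.1 : Set (Fin n))).Reachable r v}

/-!
For a fixed `k`-set `S`, a graph `H` on `S` with `e` edges is the induced subgraph of `G(n,p)`
with probability `p^e (1-p)^(C(k,2)-e) = q^(-C(k,2)) (pq)^e`. Hence the expectation is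
`C(n,k) q^(-C(k,2))` times the edge generating function of rooted forests on `k` labelled
vertices, evaluated at `pq`. That generating function is `(1 + k x)^(k-1)`, because the number
`f i` of rooted forests with `i` edges satisfies `(i+1) f (i+1) = k (k-1-i) f i`: cutting an edge
of a forest, which makes its child end a new root, is inverse to grafting a root `u` onto a
vertex outside the tree of `u`, and a forest with `i` edges admits `k (k-1-i)` grafts.
So `f i = C(k-1, i) k^i`.
-/

open Finset

namespace SimpleGraph

variable {V : Type*} {G : SimpleGraph V} {a b u v x y : V}

def IsRootedForest (G : SimpleGraph V) (R : Finset V) : Prop :=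
  G.IsAcyclic ∧ ∀ w, ∃! r, r ∈ R ∧ G.Reachable r w

/-- `a` is the child end of the edge `ab`: cutting the edge makes `a` the root of a new tree. -/
def IsChildEdge [DecidableEq V] (G : SimpleGraph V) (R : Finset V) (a b : V) : Prop :=
  G.Adj a b ∧ a ∉ R ∧ IsRootedForest (G \ edge a b) (insert a R)

lemma adj_sup_edge (huv : u ≠ v) : (G ⊔ edge u v).Adj u v :=
  .inr ((edge_adj ..).2 ⟨.inl ⟨rfl, rfl⟩, huv⟩)

lemma sdiff_edge_sup_edge (h : G.Adj a b) : G \ edge a b ⊔ edge a b = G :=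
  sdiff_sup_cancel ((edge_le_iff _).2 (.inr h))

lemma sup_edge_sdiff_edge (h : ¬G.Adj u v) : (G ⊔ edge u v) \ edge u v = G :=
  ((disjoint_edge _).2 h).sup_sdiff_cancel_right

lemma not_adj_sdiff_edge : ¬(G \ edge a b).Adj a b :=
  fun h => h.2 ((edge_adj ..).2 ⟨.inl ⟨rfl, rfl⟩, h.1.ne⟩)

lemma Reachable.sup_edge_cases (h : (G ⊔ edge u v).Reachable x y) :
    G.Reachable x y ∨ G.Reachable x u ∧ G.Reachable v y ∨ G.Reachable x v ∧ G.Reachable u y := by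
  obtain ⟨p⟩ := h
  induction p with
  | nil => exact .inl .rfl
  | cons hadj _ ih =>
    rcases hadj with hadj | hadj
    · have := hadj.reachable
      rcases ih with h | ⟨h₁, h₂⟩ | ⟨h₁, h₂⟩
      exacts [.inl (this.trans h), .inr (.inl ⟨this.trans h₁, h₂⟩),
        .inr (.inr ⟨this.trans h₁, h₂⟩)]
    · obtain ⟨⟨rfl, rfl⟩ | ⟨rfl, rfl⟩, -⟩ := (edge_adj ..).1 hadj <;>
        rcases ih with h | ⟨h₁, h₂⟩ | ⟨h₁, h₂⟩ <;> tauto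

lemma Reachable.sdiff_edge_cases (hab : G.Adj a b) (h : G.Reachable x y) :
    (G \ edge a b).Reachable x y ∨ (G \ edge a b).Reachable x a ∧ (G \ edge a b).Reachable b y ∨
      (G \ edge a b).Reachable x b ∧ (G \ edge a b).Reachable a y := by
  rw [← sdiff_edge_sup_edge hab] at h
  exact h.sup_edge_cases

lemma IsAcyclic.not_reachable_sdiff_edge (hG : G.IsAcyclic) (h : G.Adj a b) :
    ¬(G \ edge a b).Reachable a b :=
  isBridge_iff.1 (isAcyclic_iff_forall_adj_isBridge.1 hG h)

lemma ncard_edgeSet_sup_edge [Finite V] (huv : u ≠ v) (h : ¬G.Adj u v) :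
    (G ⊔ edge u v).edgeSet.ncard = G.edgeSet.ncard + 1 := by
  rw [edgeSet_sup, edgeSet_edge_of_ne huv, Set.union_singleton,
    Set.ncard_insert_of_notMem (by simpa using h)]

lemma ncard_edgeSet_sdiff_edge [Finite V] (h : G.Adj a b) :
    (G \ edge a b).edgeSet.ncard + 1 = G.edgeSet.ncard := by
  conv_rhs => rw [← sdiff_edge_sup_edge h]
  rw [ncard_edgeSet_sup_edge h.ne not_adj_sdiff_edge]

lemma isRootedForest_bot [Fintype V] : IsRootedForest (⊥ : SimpleGraph V) univ :=
  ⟨isAcyclic_bot, fun w => ⟨w, ⟨mem_univ w, .rfl⟩, fun _ hr => reachable_bot.1 hr.2⟩⟩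

namespace IsRootedForest

variable {R : Finset V} {r s : V}

lemma eq_univ_of_edgeSet_eq_empty [Fintype V] (hF : IsRootedForest G R) (h : G.edgeSet = ∅) :
    R = univ := by
  rw [edgeSet_eq_empty] at h
  subst h
  refine eq_univ_of_forall fun w => ?_
  obtain ⟨r, ⟨hr, hrw⟩, -⟩ := hF.2 w
  rwa [reachable_bot.1 hrw] at hr

lemma eq_of_reachable (hF : IsRootedForest G R) (hr : r ∈ R) (hs : s ∈ R)
    (hrx : G.Reachable r x) (hsx : G.Reachable s x) : r = s :=
  (hF.2 x).unique ⟨hr, hrx⟩ ⟨hs, hsx⟩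

lemma sup_edge [DecidableEq V] (hF : IsRootedForest G R) (hu : u ∈ R) (huv : ¬G.Reachable u v) :
    IsRootedForest (G ⊔ edge u v) (R.erase u) := by
  have hle : G ≤ G ⊔ edge u v := le_sup_left
  refine ⟨hF.1.sup_edge_of_not_reachable huv, fun w => ?_⟩
  by_cases huw : G.Reachable u w
  · -- the tree of `u` now hangs below `v`, so `w` takes the root of `v`
    obtain ⟨s, ⟨hs, hsv⟩, -⟩ := hF.2 v
    have hsu : s ≠ u := by rintro rfl; exact huv hsv
    have hne : u ≠ v := by rintro rfl; exact huv .rfl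
    refine ⟨s, ⟨mem_erase.2 ⟨hsu, hs⟩, ((hsv.mono hle).trans
      (adj_sup_edge hne).symm.reachable).trans (huw.mono hle)⟩, ?_⟩
    rintro t ⟨ht, htw⟩
    obtain ⟨htu, htR⟩ := mem_erase.1 ht
    rcases htw.sup_edge_cases with h | ⟨h, -⟩ | ⟨h, -⟩
    · exact absurd (hF.eq_of_reachable htR hu h huw) htu
    · exact absurd (hF.eq_of_reachable htR hu h .rfl) htu
    · exact hF.eq_of_reachable htR hs h hsv
  · obtain ⟨s, ⟨hs, hsw⟩, hsuniq⟩ := hF.2 w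
    have hsu : s ≠ u := by rintro rfl; exact huw hsw
    refine ⟨s, ⟨mem_erase.2 ⟨hsu, hs⟩, hsw.mono hle⟩, ?_⟩
    rintro t ⟨ht, htw⟩
    obtain ⟨htu, htR⟩ := mem_erase.1 ht
    rcases htw.sup_edge_cases with h | ⟨h, -⟩ | ⟨-, h⟩
    · exact hsuniq t ⟨htR, h⟩
    · exact absurd (hF.eq_of_reachable htR hu h .rfl) htu
    · exact absurd h huw

lemma isChildEdge_of_not_reachable [DecidableEq V] (hF : IsRootedForest G R) (hab : G.Adj a b)
    (hr : r ∈ R) (hra : G.Reachable r a) (hcut : ¬(G \ edge a b).Reachable r a) :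
    IsChildEdge G R a b := by
  have hle : G \ edge a b ≤ G := sdiff_le
  have haR : a ∉ R := fun haR => hcut (hF.eq_of_reachable hr haR hra .rfl ▸ .rfl)
  refine ⟨hab, haR, hF.1.anti hle, fun w => ?_⟩
  by_cases haw : (G \ edge a b).Reachable a w
  · refine ⟨a, ⟨mem_insert_self a R, haw⟩, ?_⟩
    rintro s ⟨hs, hsw⟩
    rcases mem_insert.1 hs with rfl | hs
    · rfl
    · have hsr := hF.eq_of_reachable hs hr ((hsw.trans haw.symm).mono hle) hra
      exact absurd (hsr ▸ hsw.trans haw.symm) hcut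
  · obtain ⟨s, ⟨hs, hsw⟩, hsuniq⟩ := hF.2 w
    have hsw' : (G \ edge a b).Reachable s w := by
      rcases hsw.sdiff_edge_cases hab with h | ⟨h, -⟩ | ⟨-, h⟩
      · exact h
      · exact absurd (hF.eq_of_reachable hs hr (h.mono hle) hra ▸ h) hcut
      · exact absurd h haw
    refine ⟨s, ⟨mem_insert_of_mem hs, hsw'⟩, ?_⟩
    rintro t ⟨ht, htw⟩
    rcases mem_insert.1 ht with rfl | ht
    · exact absurd htw haw
    · exact hsuniq t ⟨ht, htw.mono hle⟩

lemma isChildEdge_or [DecidableEq V] (hF : IsRootedForest G R) (hab : G.Adj a b) :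
    IsChildEdge G R a b ∨ IsChildEdge G R b a := by
  obtain ⟨r, ⟨hr, hra⟩, -⟩ := hF.2 a
  have hba : G \ edge b a = G \ edge a b := by rw [edge_comm]
  have hnot : ¬((G \ edge a b).Reachable r a ∧ (G \ edge a b).Reachable r b) :=
    fun ⟨h₁, h₂⟩ => hF.1.not_reachable_sdiff_edge hab (h₁.symm.trans h₂)
  by_cases h : (G \ edge a b).Reachable r a
  · refine .inr (hF.isChildEdge_of_not_reachable hab.symm hr (hra.trans hab.reachable) ?_)
    rw [hba]
    exact fun h' => hnot ⟨h, h'⟩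
  · exact .inl (hF.isChildEdge_of_not_reachable hab hr hra h)

lemma not_isChildEdge_and [DecidableEq V] (hF : IsRootedForest G R) :
    ¬(IsChildEdge G R a b ∧ IsChildEdge G R b a) := by
  rintro ⟨⟨hab, haR, hFa⟩, ⟨-, hbR, hFb⟩⟩
  rw [edge_comm] at hFb
  obtain ⟨r, ⟨hr, hra⟩, -⟩ := hF.2 a
  -- after the cut, `r` would be a second root of the tree containing `a` or `b`
  obtain h | h : (G \ edge a b).Reachable r a ∨ (G \ edge a b).Reachable r b := by
    rcases hra.sdiff_edge_cases hab with h | ⟨h, -⟩ | ⟨h, -⟩ <;> tauto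
  · exact haR (hFa.eq_of_reachable (mem_insert_of_mem hr) (mem_insert_self a R) h .rfl ▸ hr)
  · exact hbR (hFb.eq_of_reachable (mem_insert_of_mem hr) (mem_insert_self b R) h .rfl ▸ hr)

lemma exists_isChildEdge [DecidableEq V] (hF : IsRootedForest G R) (h : G.edgeSet.Nonempty) :
    ∃ a b, IsChildEdge G R a b := by
  obtain ⟨e, he⟩ := h
  induction e using Sym2.ind with
  | h x y => exact (hF.isChildEdge_or he).elim (⟨x, y, ·⟩) (⟨y, x, ·⟩)

end IsRootedForest

lemma prod_ite_mem_edgeSet {M : Type*} [CommMonoid M] [Fintype V] [DecidableEq V]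
    (H : SimpleGraph V) [DecidableRel H.Adj] (x y : M) :
    ∏ d : {d : Sym2 V // ¬d.IsDiag}, (if d.1 ∈ H.edgeSet then x else y) =
      x ^ H.edgeSet.ncard * y ^ ((Fintype.card V).choose 2 - H.edgeSet.ncard) := by
  have hcard : #({d | d.1 ∈ H.edgeSet} : Finset {d : Sym2 V // ¬d.IsDiag}) = H.edgeSet.ncard := by
    rw [← Set.ncard_coe_finset, ← Set.ncard_image_of_injective _ Subtype.val_injective]
    congr
    ext e
    simp only [coe_filter, mem_univ, true_and, Set.mem_image, Subtype.exists, exists_and_right,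
      exists_eq_right]
    exact ⟨fun ⟨_, h⟩ => h, fun h => ⟨H.not_isDiag_of_mem_edgeSet h, h⟩⟩
  rw [prod_ite, prod_const, prod_const, filter_not, card_sdiff_of_subset (filter_subset _ _),
    hcard, card_univ, Sym2.card_subtype_not_diag]

section Counting

open Classical

variable [Fintype V] [DecidableEq V] {R : Finset V}

namespace IsRootedForest

theorem card_add_ncard_edgeSet (hF : IsRootedForest G R) :
    #R + G.edgeSet.ncard = Fintype.card V := by
  induction hi : G.edgeSet.ncard generalizing G R with
  | zero =>
    rw [hF.eq_univ_of_edgeSet_eq_empty ((Set.ncard_eq_zero).1 hi), card_univ, add_zero]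
  | succ i ih =>
    obtain ⟨a, b, hab, haR, hF'⟩ :=
      hF.exists_isChildEdge (Set.nonempty_of_ncard_ne_zero (hi ▸ i.succ_ne_zero))
    have := ih hF' (by have := ncard_edgeSet_sdiff_edge hab; omega)
    rw [card_insert_of_notMem haR] at this
    omega

lemma sum_card_reachable (hF : IsRootedForest G R) :
    ∑ r ∈ R, #{w | G.Reachable r w} = Fintype.card V := by
  rw [← card_biUnion, ← card_univ]
  · congr
    refine eq_univ_of_forall fun w => ?_
    obtain ⟨r, ⟨hr, hrw⟩, -⟩ := hF.2 w
    exact mem_biUnion.2 ⟨r, hr, mem_filter.2 ⟨mem_univ w, hrw⟩⟩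
  · intro r hr s hs hrs
    exact Finset.disjoint_left.2 fun w hrw hsw =>
      hrs (hF.eq_of_reachable hr hs (mem_filter.1 hrw).2 (mem_filter.1 hsw).2)

end IsRootedForest

noncomputable def cuts (G : SimpleGraph V) (R : Finset V) : Finset (V × V) :=
  {p | IsChildEdge G R p.1 p.2}

noncomputable def grafts (G : SimpleGraph V) (R : Finset V) : Finset (V × V) :=
  {p ∈ R ×ˢ univ | ¬G.Reachable p.1 p.2}

@[simp] lemma mem_cuts {p : V × V} : p ∈ cuts G R ↔ IsChildEdge G R p.1 p.2 := by
  simp [cuts]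

@[simp] lemma mem_grafts {p : V × V} : p ∈ grafts G R ↔ p.1 ∈ R ∧ ¬G.Reachable p.1 p.2 := by
  simp [grafts]

lemma IsRootedForest.card_cuts (hF : IsRootedForest G R) : #(cuts G R) = G.edgeSet.ncard := by
  have himage : G.edgeSet = (fun p : V × V => s(p.1, p.2)) '' ↑(cuts G R) := by
    ext e
    induction e using Sym2.ind with
    | h x y =>
      simp only [mem_edgeSet, Set.mem_image, mem_coe, mem_cuts, Prod.exists]
      constructor
      · intro hxy
        rcases hF.isChildEdge_or hxy with h | h
        exacts [⟨x, y, h, rfl⟩, ⟨y, x, h, Sym2.eq_swap⟩]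
      · rintro ⟨a, b, h, hab⟩
        rcases Sym2.eq_iff.1 hab with ⟨rfl, rfl⟩ | ⟨rfl, rfl⟩
        exacts [h.1, h.1.symm]
  rw [himage, Set.InjOn.ncard_image, Set.ncard_coe_finset]
  rintro ⟨a, b⟩ hab ⟨a', b'⟩ hab' heq
  rcases Sym2.eq_iff.1 heq with ⟨rfl, rfl⟩ | ⟨rfl, rfl⟩
  · rfl
  · simp only [mem_coe, mem_cuts] at hab hab'
    exact (hF.not_isChildEdge_and ⟨hab, hab'⟩).elim

lemma IsRootedForest.card_grafts (hF : IsRootedForest G R) :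
    #(grafts G R) = Fintype.card V * (Fintype.card V - 1 - G.edgeSet.ncard) := by
  have hsum : #(grafts G R) + Fintype.card V = #R * Fintype.card V :=
    calc _ = ∑ u ∈ R, (#{v | G.Reachable u v} + #{v | ¬G.Reachable u v}) := by
          rw [sum_add_distrib, hF.sum_card_reachable, grafts, card_filter, sum_product, add_comm]
          simp only [card_filter]
      _ = #R * Fintype.card V := by simp [card_filter_add_card_filter_not]
  have hR : #R = Fintype.card V - G.edgeSet.ncard := by
    have := hF.card_add_ncard_edgeSet
    omega
  rw [Nat.sub_right_comm, Nat.mul_sub_one, mul_comm, ← hR]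
  omega

variable (V) in
noncomputable def rootedForests (i : ℕ) : Finset (SimpleGraph V × Finset V) :=
  {F | IsRootedForest F.1 F.2 ∧ F.1.edgeSet.ncard = i}

@[simp] lemma mem_rootedForests {i : ℕ} {F : SimpleGraph V × Finset V} :
    F ∈ rootedForests V i ↔ IsRootedForest F.1 F.2 ∧ F.1.edgeSet.ncard = i := by
  simp [rootedForests]

/-- Cutting a child edge `ab` of a forest with `i + 1` edges and grafting the new root `a`
back onto `b` are inverse operations. -/
lemma card_sigma_cuts_eq_card_sigma_grafts (i : ℕ) :
    #((rootedForests V (i + 1)).sigma fun F => cuts F.1 F.2) =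
      #((rootedForests V i).sigma fun F => grafts F.1 F.2) := by
  refine card_bij' (fun x _ => ⟨(x.1.1 \ edge x.2.1 x.2.2, insert x.2.1 x.1.2), x.2⟩)
    (fun y _ => ⟨(y.1.1 ⊔ edge y.2.1 y.2.2, y.1.2.erase y.2.1), y.2⟩) ?_ ?_ ?_ ?_
  all_goals rintro ⟨⟨G, R⟩, u, v⟩ h
  all_goals simp only [mem_sigma, mem_rootedForests, mem_cuts, mem_grafts] at h ⊢
  · obtain ⟨⟨hF, hi⟩, hab, haR, hF'⟩ := h
    exact ⟨⟨hF', by have := ncard_edgeSet_sdiff_edge hab; omega⟩, mem_insert_self u R,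
      hF.1.not_reachable_sdiff_edge hab⟩
  · obtain ⟨⟨hF, hi⟩, hu, huv⟩ := h
    have hne : u ≠ v := by rintro rfl; exact huv .rfl
    have hnadj : ¬G.Adj u v := fun h => huv h.reachable
    refine ⟨⟨hF.sup_edge hu huv, by rw [ncard_edgeSet_sup_edge hne hnadj, hi]⟩,
      adj_sup_edge hne, notMem_erase u R, ?_⟩
    rwa [sup_edge_sdiff_edge hnadj, insert_erase hu]
  · obtain ⟨-, hab, haR, -⟩ := h
    simp [sdiff_edge_sup_edge hab, erase_insert haR]
  · obtain ⟨-, hu, huv⟩ := h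
    simp [sup_edge_sdiff_edge fun h : G.Adj u v => huv h.reachable, insert_erase hu]

lemma card_rootedForests_succ_mul (i : ℕ) :
    #(rootedForests V (i + 1)) * (i + 1) =
      #(rootedForests V i) * (Fintype.card V * (Fintype.card V - 1 - i)) := by
  have h := card_sigma_cuts_eq_card_sigma_grafts (V := V) i
  rwa [card_sigma, card_sigma, sum_const_nat, sum_const_nat] at h
  · intro F hF
    rw [mem_rootedForests] at hF
    rw [hF.1.card_grafts, hF.2]
  · intro F hF
    rw [mem_rootedForests] at hF
    rw [hF.1.card_cuts, hF.2]

theorem card_rootedForests (i : ℕ) :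
    #(rootedForests V i) = (Fintype.card V - 1).choose i * Fintype.card V ^ i := by
  induction i with
  | zero =>
    rw [Nat.choose_zero_right, pow_zero, mul_one, card_eq_one]
    refine ⟨(⊥, univ), eq_singleton_iff_unique_mem.2 ⟨?_, ?_⟩⟩
    · simp [isRootedForest_bot]
    · rintro ⟨G, R⟩ hF
      rw [mem_rootedForests] at hF
      dsimp only at hF
      have hG := (Set.ncard_eq_zero).1 hF.2
      rw [hF.1.eq_univ_of_edgeSet_eq_empty hG, edgeSet_eq_empty.1 hG]
  | succ i ih =>
    refine Nat.eq_of_mul_eq_mul_right (Nat.add_one_pos i) ?_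
    rw [card_rootedForests_succ_mul, ih]
    calc _ = (Fintype.card V - 1).choose i * (Fintype.card V - 1 - i) *
          Fintype.card V ^ (i + 1) := by ring
      _ = _ := by rw [← Nat.choose_succ_right_eq]; ring

theorem sum_rootedForests_pow {A : Type*} [CommSemiring A] (x : A) :
    ∑ F : SimpleGraph V × Finset V with IsRootedForest F.1 F.2, x ^ F.1.edgeSet.ncard =
      (1 + Fintype.card V * x) ^ (Fintype.card V - 1) := by
  set m := Fintype.card V
  have hmaps : ∀ F ∈ ({F | IsRootedForest F.1 F.2} : Finset (SimpleGraph V × Finset V)),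
      F.1.edgeSet.ncard ∈ range (m + 1) := fun F hF => by
    have := (mem_filter.1 hF).2.card_add_ncard_edgeSet
    rw [mem_range]
    omega
  calc _ = ∑ i ∈ range (m + 1), ∑ F ∈ rootedForests V i, x ^ F.1.edgeSet.ncard := by
        rw [← sum_fiberwise_of_maps_to hmaps]
        simp only [filter_filter]
        rfl
    _ = ∑ i ∈ range (m + 1), (((m - 1).choose i * m ^ i : ℕ) : A) * x ^ i := by
        refine sum_congr rfl fun i _ => ?_
        rw [← card_rootedForests, sum_congr rfl fun F hF => by rw [(mem_rootedForests.1 hF).2],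
          sum_const, nsmul_eq_mul]
    _ = _ := by
        rw [add_comm (1 : A), add_pow,
          ← sum_subset (range_subset_range.2 (by omega : m - 1 + 1 ≤ m + 1))]
        · refine sum_congr rfl fun i _ => ?_
          push_cast
          ring
        · intro i _ hi
          rw [mem_range, not_lt] at hi
          simp [Nat.choose_eq_zero_of_lt (by omega : m - 1 < i)]

end Counting

end SimpleGraph

lemma integral_natCard_eq_sum_measureReal {Ω α : Type*} [MeasurableSpace Ω] [Finite Ω]
    [MeasurableSingletonClass Ω] [Fintype α] (μ : Measure Ω) [IsFiniteMeasure μ]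
    (P : α → Ω → Prop) :
    ∫ ω, (Nat.card {a // P a ω} : ℝ) ∂μ = ∑ a, μ.real {ω | P a ω} := by
  classical
  simp only [Nat.card_eq_fintype_card, Fintype.card_subtype, Finset.card_filter, Nat.cast_sum,
    Nat.cast_ite, Nat.cast_one, Nat.cast_zero]
  rw [integral_finsetSum _ fun _ _ => .of_finite]
  refine Finset.sum_congr rfl fun a _ => ?_
  rw [← integral_indicator_one (Set.toFinite _).measurableSet]
  congr with ω

section RandomGraph

open SimpleGraph

variable {n : ℕ} {p : ℝ}

lemma isProbabilityMeasure_bernoulliMeasure (hp0 : 0 ≤ p) (hp1 : p ≤ 1) :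
    IsProbabilityMeasure (bernoulliMeasure p) :=
  ⟨by simp [bernoulliMeasure, ← ENNReal.ofReal_add hp0 (sub_nonneg.2 hp1)]⟩

lemma bernoulliMeasure_real_singleton (hp0 : 0 ≤ p) (hp1 : p ≤ 1) (b : Bool) :
    (bernoulliMeasure p).real {b} = if b then p else 1 - p := by
  cases b <;> simp [bernoulliMeasure, measureReal_def, hp0, hp1]

lemma isProbabilityMeasure_erMeasure (hp0 : 0 ≤ p) (hp1 : p ≤ 1) :
    IsProbabilityMeasure (erMeasure n p) := by
  have := isProbabilityMeasure_bernoulliMeasure hp0 hp1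
  unfold erMeasure
  infer_instance

lemma mem_edgeSet_induce_erGraph {S : Set (Fin n)} {ω : Sym2 (Fin n) → Bool} {d : Sym2 S} :
    d ∈ ((erGraph n ω).induce S).edgeSet ↔ ¬d.IsDiag ∧ ω (d.map Subtype.val) = true := by
  induction d using Sym2.ind with
  | h x y => simp [erGraph, Subtype.ext_iff]

lemma setOf_induce_erGraph_eq_pi (S : Set (Fin n)) (H : SimpleGraph S) :
    {ω | (erGraph n ω).induce S = H} = Set.univ.pi fun e => {b | ∀ d : Sym2 S, ¬d.IsDiag →
      d.map Subtype.val = e → (b = true ↔ d ∈ H.edgeSet)} := by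
  ext ω
  simp only [Set.mem_ofPred_eq, Set.mem_univ_pi]
  rw [← edgeSet_inj, Set.ext_iff]
  constructor
  · rintro h e d hd rfl
    rw [← h, mem_edgeSet_induce_erGraph, and_iff_right hd]
  · intro h d
    rw [mem_edgeSet_induce_erGraph]
    by_cases hd : d.IsDiag
    · simp only [hd, not_true_eq_false, false_and, false_iff]
      exact fun h' => H.not_isDiag_of_mem_edgeSet h' hd
    · rw [← h _ d hd rfl, and_iff_right hd]

theorem erMeasure_real_induce_eq (hp0 : 0 ≤ p) (hp1 : p ≤ 1) (S : Set (Fin n)) [Fintype S]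
    (H : SimpleGraph S) :
    (erMeasure n p).real {ω | (erGraph n ω).induce S = H} =
      p ^ H.edgeSet.ncard * (1 - p) ^ ((Fintype.card S).choose 2 - H.edgeSet.ncard) := by
  classical
  have := isProbabilityMeasure_bernoulliMeasure hp0 hp1
  let g : {d : Sym2 S // ¬d.IsDiag} → Sym2 (Fin n) := fun d => d.1.map Subtype.val
  have hg : Function.Injective g := fun d d' h =>
    Subtype.ext (Sym2.map.injective Subtype.val_injective h)
  -- the event is a box: each off-diagonal pair inside `S` is forced, all others are free
  rw [setOf_induce_erGraph_eq_pi, measureReal_def, erMeasure, Measure.pi_pi, ENNReal.toReal_prod,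
    ← H.prod_ite_mem_edgeSet p (1 - p)]
  refine (Fintype.prod_of_injective g hg _ _ (fun e he => ?_) fun d => ?_).symm
  · rw [← measureReal_def, ← probReal_univ (μ := bernoulliMeasure p)]
    congr
    exact Set.eq_univ_of_forall fun b d hd hde => (he ⟨⟨d, hd⟩, hde⟩).elim
  · have hforced : {b | ∀ d' : Sym2 S, ¬d'.IsDiag → d'.map Subtype.val = g d →
        (b = true ↔ d' ∈ H.edgeSet)} = {decide (d.1 ∈ H.edgeSet)} := by
      ext b
      simp only [Set.mem_ofPred_eq, Set.mem_singleton_iff]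
      refine ⟨fun h => Bool.eq_iff_iff.2 ((h d d.2 rfl).trans decide_eq_true_iff.symm),
        fun h d' hd' hd'd => ?_⟩
      obtain rfl : ⟨d', hd'⟩ = d := hg hd'd
      rw [h, decide_eq_true_iff]
    rw [hforced, ← measureReal_def, bernoulliMeasure_real_singleton hp0 hp1]
    by_cases h : d.1 ∈ H.edgeSet <;> simp [h]

lemma sum_measureReal_isRootedForest_induce (hp0 : 0 ≤ p) (hp1 : p < 1) (S : Set (Fin n))
    [Fintype S] :
    ∑ R : Finset S, (erMeasure n p).real {ω | IsRootedForest ((erGraph n ω).induce S) R} =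
      (1 - p) ^ (Fintype.card S).choose 2 * (1 + Fintype.card S * (p / (1 - p))) ^
        (Fintype.card S - 1) := by
  classical
  have := isProbabilityMeasure_erMeasure (n := n) hp0 hp1.le
  have hlaw (R : Finset S) :
      (erMeasure n p).real {ω | IsRootedForest ((erGraph n ω).induce S) R} =
        ∑ H : SimpleGraph S with IsRootedForest H R,
          (erMeasure n p).real {ω | (erGraph n ω).induce S = H} := by
    have h := sum_measureReal_preimage_singleton (μ := erMeasure n p)
      (f := fun ω => (erGraph n ω).induce S) {H | IsRootedForest H R} fun _ _ => .of_discrete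
    convert h.symm using 2
    · ext ω
      simp
    · rfl
  have hweight (H : SimpleGraph S) :
      p ^ H.edgeSet.ncard * (1 - p) ^ ((Fintype.card S).choose 2 - H.edgeSet.ncard) =
        (1 - p) ^ (Fintype.card S).choose 2 * (p / (1 - p)) ^ H.edgeSet.ncard := by
    have he : H.edgeSet.ncard ≤ (Fintype.card S).choose 2 := by
      rw [← coe_edgeFinset, Set.ncard_coe_finset]
      exact H.card_edgeFinset_le_card_choose_two
    have hp : 1 - p ≠ 0 := by linarith
    rw [← Nat.sub_add_cancel he, pow_add, Nat.add_sub_cancel, div_pow]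
    field_simp
  simp only [hlaw, erMeasure_real_induce_eq hp0 hp1.le, hweight, ← mul_sum]
  rw [← sum_rootedForests_pow, sum_filter, Fintype.sum_prod_type, sum_comm]
  simp only [sum_filter]

lemma sum_measureReal_inducedRootedForest_card_eq (hp0 : 0 ≤ p) (hp1 : p < 1) (k : ℕ)
    (S : Finset (Fin n)) :
    ∑ R : Finset (Fin n), (erMeasure n p).real {ω | #S = k ∧ R ⊆ S ∧
      ((erGraph n ω).induce (S : Set (Fin n))).IsAcyclic ∧
      ∀ v : (S : Set (Fin n)), ∃! r : (S : Set (Fin n)),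
        (r : Fin n) ∈ R ∧ ((erGraph n ω).induce (S : Set (Fin n))).Reachable r v} =
      if #S = k then (1 - p) ^ k.choose 2 * (1 + k * (p / (1 - p))) ^ (k - 1) else 0 := by
  classical
  split_ifs with hS
  swap
  · simp [hS]
  have hcard : Fintype.card (S : Set (Fin n)) = k := by simp [hS]
  rw [← hcard, ← sum_measureReal_isRootedForest_induce hp0 hp1,
    ← sum_subset (subset_univ S.powerset) fun R _ hR => by simp [(mem_powerset.not).1 hR]]
  refine sum_nbij' (fun R => R.subtype (· ∈ (S : Set (Fin n))))
    (fun R => R.map (Function.Embedding.subtype _)) ?_ ?_ ?_ ?_ ?_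
  · simp
  · intro R _
    exact mem_coe.2 (mem_powerset.2 (coe_subset.1 (map_subtype_subset R)))
  · intro R hR
    exact subtype_map_of_mem fun x hx => mem_powerset.1 hR hx
  · intro R _
    ext x
    simp
  · intro R hR
    congr with ω
    simp [IsRootedForest, hS, mem_powerset.1 hR]

end RandomGraph

theorem stmt_3_general (n k : ℕ) (p q : ℝ)
    (hp0 : 0 < p) (hp1 : p < 1) (hq : q = 1 / (1 - p)) :
    ∫ ω, (countIndRootedForests n k (erGraph n ω) : ℝ) ∂(erMeasure n p)
      = (n.choose k : ℝ) * q ^ (-(k.choose 2 : ℤ)) * ((k : ℝ) * p * q + 1) ^ (k - 1) := by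
  have := isProbabilityMeasure_erMeasure (n := n) hp0.le hp1.le
  unfold countIndRootedForests
  rw [integral_natCard_eq_sum_measureReal, Fintype.sum_prod_type]
  simp only [sum_measureReal_inducedRootedForest_card_eq hp0.le hp1]
  rw [sum_ite, sum_const_zero, add_zero, sum_const, nsmul_eq_mul, ← powerset_univ,
    ← powersetCard_eq_filter, card_powersetCard, card_univ, Fintype.card_fin, hq, zpow_neg,
    zpow_natCast, one_div, inv_pow, inv_inv]
  ring

/-- The expected number of induced rooted forests on `k` vertices in `G(n,p)` equals
`C(n,k) q^(-C(k,2)) (k p q + 1)^(k-1)` where `q = 1/(1-p)`. -/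
theorem stmt_3 (n k : ℕ) (hk : 1 ≤ k) (hkn : k ≤ n) (p q : ℝ)
    (hp0 : 0 < p) (hp1 : p < 1) (hq : q = 1 / (1 - p)) :
    ∫ ω, (countIndRootedForests n k (erGraph n ω) : ℝ) ∂(erMeasure n p)
      = (n.choose k : ℝ) * q ^ (-(k.choose 2 : ℤ)) * ((k : ℝ) * p * q + 1) ^ (k - 1) :=
  stmt_3_general n k p q hp0 hp1 hq
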